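/- Let f = Σ_μ f_μ e^μ be a nonzero element of the group algebra over ℚ of a lattice X, and define its Newton polytope deg(f) as the convex hull of {μ : f_μ ≠ 0} in X ⊗ ℚ. Then for nonzero f, g: deg(f·g) = deg(f) + deg(g) (Minkowski sum). -/

import Mathlib

/-!
Since `supp (f * g) ⊆ supp f + supp g`, one inclusion is immediate. Conversely, the polytope
`deg f + deg g` is the convex hull of its vertices, and a vertex `v` has a unique decomposition
`v = μ + ν` with `μ ∈ supp f`, `ν ∈ supp g`: another one, `v = μ' + ν'`, would make `v` the
midpoint of `μ + ν'` and `μ' + ν`. Hence the coefficient of `e^v` in `f * g` is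
`f_μ g_ν ≠ 0`, so every vertex lies in `supp (f * g)`.
-/

open Pointwise Set

section Convex

variable {𝕜 E : Type*} [Field 𝕜] [LinearOrder 𝕜] [IsStrictOrderedRing 𝕜]
  [AddCommGroup E] [Module 𝕜 E]

theorem mem_extremePoints_convexHull_of_notMem_convexHull_sdiff {s : Set E} {x : E}
    (hxs : x ∈ s) (hx : x ∉ convexHull 𝕜 (s \ {x})) :
    x ∈ (convexHull 𝕜 s).extremePoints 𝕜 := by
  rcases (s \ {x}).eq_empty_or_nonempty with hs | hs
  · obtain rfl : s = {x} := (subset_singleton_iff_eq.1 (sdiff_eq_empty.1 hs)).resolve_left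
      (nonempty_of_mem hxs).ne_empty
    simp
  rw [← insert_eq_of_mem hxs, ← insert_sdiff_singleton, convexHull_insert hs,
    convexJoin_singleton_left]
  refine mem_extremePoints_iff_left.2 ⟨mem_iUnion₂.2 ⟨_, subset_convexHull 𝕜 _ hs.some_mem,
    left_mem_segment 𝕜 _ _⟩, ?_⟩
  simp only [mem_iUnion₂]
  rintro _ ⟨y₁, hy₁, α₁, β₁, -, hβ₁, hαβ₁, rfl⟩ _ ⟨y₂, hy₂, α₂, β₂, -, hβ₂, hαβ₂, rfl⟩
    ⟨a, b, ha, hb, hab, h⟩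
  obtain rfl := eq_sub_of_add_eq hαβ₁
  obtain rfl := eq_sub_of_add_eq hαβ₂
  obtain rfl := eq_sub_of_add_eq' hab
  obtain rfl | hβ₁ := hβ₁.eq_or_lt
  · module
  -- otherwise `x` would be a convex combination of `y₁` and `y₂`
  set c := a * β₁ + (1 - a) * β₂
  have hc : 0 < c := by positivity
  have hcx : c • x = (a * β₁) • y₁ + ((1 - a) * β₂) • y₂ := by
    linear_combination (norm := module) -h
  refine absurd ?_ hx
  convert convex_convexHull 𝕜 _ hy₁ hy₂ (div_nonneg (mul_nonneg ha.le hβ₁.le) hc.le)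
    (div_nonneg (mul_nonneg hb.le hβ₂) hc.le) (by rw [← add_div, div_self hc.ne']) using 1
  rw [← inv_smul_smul₀ hc.ne' x, hcx]
  module

theorem Set.Finite.convexHull_extremePoints_convexHull {s : Set E} (hs : s.Finite) :
    convexHull 𝕜 ((convexHull 𝕜 s).extremePoints 𝕜) = convexHull 𝕜 s := by
  classical
  refine (convexHull_min extremePoints_subset (convex_convexHull 𝕜 s)).antisymm ?_
  lift s to Finset E using hs
  induction s using Finset.strongInduction with
  | H s ih =>
    by_cases h : ∃ x ∈ s, x ∈ convexHull 𝕜 (↑s \ {x})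
    · obtain ⟨x, hxs, hx⟩ := h
      have hs : convexHull 𝕜 (s : Set E) = convexHull 𝕜 ↑(s.erase x) := by
        rw [Finset.coe_erase]
        refine (convexHull_min (fun y hy ↦ ?_) (convex_convexHull 𝕜 _)).antisymm
          (convexHull_mono sdiff_subset)
        obtain rfl | hyx := eq_or_ne y x
        exacts [hx, subset_convexHull 𝕜 _ ⟨hy, hyx⟩]
      rw [hs]
      exact ih _ (Finset.erase_ssubset hxs)
    · push Not at h
      exact convexHull_mono fun x hx ↦
        mem_extremePoints_convexHull_of_notMem_convexHull_sdiff hx (h x hx)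

theorem eq_and_eq_of_add_eq_of_add_mem_extremePoints {A B : Set E} {a₀ b₀ a b : E}
    (ha₀ : a₀ ∈ A) (hb₀ : b₀ ∈ B) (ha : a ∈ A) (hb : b ∈ B)
    (hv : a₀ + b₀ ∈ (A + B).extremePoints 𝕜) (h : a + b = a₀ + b₀) : a = a₀ ∧ b = b₀ := by
  have hmid : a₀ + b₀ ∈ openSegment 𝕜 (a + b₀) (a₀ + b) :=
    ⟨1 / 2, 1 / 2, by norm_num, by norm_num, by norm_num, by
      linear_combination (norm := module) (1 / 2 : 𝕜) • h⟩
  have ha : a = a₀ := add_right_cancel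
    (mem_extremePoints.1 hv |>.2 _ (add_mem_add ha hb₀) _ (add_mem_add ha₀ hb) hmid).1
  exact ⟨ha, add_left_cancel (ha ▸ h)⟩

end Convex

namespace AddMonoidAlgebra

variable {𝕜 E R G : Type*} [Field 𝕜] [LinearOrder 𝕜] [IsStrictOrderedRing 𝕜]
  [AddCommGroup E] [Module 𝕜 E] [Semiring R] [Add G]

theorem extremePoints_convexHull_add_subset_image_support_mul [NoZeroDivisors R]
    (φ : G →ₙ+ E) (hφ : Function.Injective φ) (f g : AddMonoidAlgebra R G) :
    (convexHull 𝕜 (φ '' f.coeff.support + φ '' g.coeff.support)).extremePoints 𝕜 ⊆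
      φ '' (f * g).coeff.support := by
  intro v hv
  have hvAB := extremePoints_convexHull_subset hv
  have hv :=
    inter_extremePoints_subset_extremePoints_of_subset (subset_convexHull 𝕜 _) ⟨hvAB, hv⟩
  obtain ⟨_, ⟨μ, hμ, rfl⟩, _, ⟨ν, hν, rfl⟩, rfl⟩ := hvAB
  have huniq : UniqueAdd f.coeff.support g.coeff.support μ ν := fun μ' ν' hμ' hν' he ↦ by
    have := eq_and_eq_of_add_eq_of_add_mem_extremePoints (mem_image_of_mem φ hμ)
      (mem_image_of_mem φ hν) (mem_image_of_mem φ hμ') (mem_image_of_mem φ hν') hv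
      (by rw [← map_add, he, map_add])
    exact ⟨hφ this.1, hφ this.2⟩
  refine ⟨μ + ν, ?_, map_add φ μ ν⟩
  rw [Finset.mem_coe, Finsupp.mem_support_iff, coeff_mul_add_of_uniqueAdd huniq]
  exact mul_ne_zero (Finsupp.mem_support_iff.1 hμ) (Finsupp.mem_support_iff.1 hν)

theorem convexHull_image_support_mul [NoZeroDivisors R]
    (φ : G →ₙ+ E) (hφ : Function.Injective φ) (f g : AddMonoidAlgebra R G) :
    convexHull 𝕜 (φ '' (f * g).coeff.support) =
      convexHull 𝕜 (φ '' f.coeff.support) + convexHull 𝕜 (φ '' g.coeff.support) := by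
  classical
  rw [← convexHull_add]
  refine (convexHull_mono ?_).antisymm ?_
  · rw [← image_add, ← Finset.coe_add]
    exact image_mono (support_coeff_mul_subset f g)
  · have hfin : (φ '' f.coeff.support + φ '' g.coeff.support).Finite :=
      (f.coeff.support.finite_toSet.image φ).add (g.coeff.support.finite_toSet.image φ)
    rw [← hfin.convexHull_extremePoints_convexHull]
    exact convexHull_mono (extremePoints_convexHull_add_subset_image_support_mul φ hφ f g)

end AddMonoidAlgebra

open Pointwise in
theorem stmt17_general (d : ℕ)
    (f g : AddMonoidAlgebra ℚ (Fin d → ℤ)) :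
    convexHull ℚ ((fun (μ : Fin d → ℤ) => fun i => (μ i : ℚ)) '' ((f * g).coeff.support : Set (Fin d → ℤ)))
      = convexHull ℚ ((fun (μ : Fin d → ℤ) => fun i => (μ i : ℚ)) '' (f.coeff.support : Set (Fin d → ℤ)))
        + convexHull ℚ ((fun (μ : Fin d → ℤ) => fun i => (μ i : ℚ)) '' (g.coeff.support : Set (Fin d → ℤ))) :=
  AddMonoidAlgebra.convexHull_image_support_mul ((Int.castAddHom ℚ).compLeft (Fin d)).toAddHom
    (Int.cast_injective.comp_left) f g

open Pointwise in
/-- For nonzero elements `f, g` of the group algebra `ℚ[X]` of a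
finitely generated free abelian group (lattice) `X = ℤ^d`, the Newton polytope
(convex hull in `X ⊗ ℚ = ℚ^d` of the support) is additive:
`deg(f·g) = deg(f) + deg(g)` (Minkowski sum). -/
theorem stmt17 (d : ℕ)
    (f g : AddMonoidAlgebra ℚ (Fin d → ℤ)) (hf : f ≠ 0) (hg : g ≠ 0) :
    convexHull ℚ ((fun (μ : Fin d → ℤ) => fun i => (μ i : ℚ)) '' ((f * g).coeff.support : Set (Fin d → ℤ)))
      = convexHull ℚ ((fun (μ : Fin d → ℤ) => fun i => (μ i : ℚ)) '' (f.coeff.support : Set (Fin d → ℤ)))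
        + convexHull ℚ ((fun (μ : Fin d → ℤ) => fun i => (μ i : ℚ)) '' (g.coeff.support : Set (Fin d → ℤ))) :=
  stmt17_general d f g
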